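/- arXiv:2108.10434 — 4 statements merged into one kernel-verified Lean document; each statement's English description precedes it below -/
import Mathlib

section
/- Under the gCANS stationarity condition, any critical point s of γ satisfies s_j/s_k = σ_j/σ_k for all j, k with σ_k > 0. -/
/-!
With `c = Lα²/2` and `N(s)` the numerator of `γ`, the partial derivative of `γ` in `sᵢ` is
`(c σᵢ²/sᵢ² · Σₖ sₖ - N(s)) / (Σₖ sₖ)²`. At a critical point, therefore, `σᵢ²/sᵢ² = N(s)/(c Σₖ sₖ)`
does not depend on `i`, and taking positive square roots gives `sⱼ/sₖ = σⱼ/σₖ`.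
-/

open Function Finset

section PartialDerivative

variable {𝕜 F ι : Type*} [NontriviallyNormedField 𝕜] [NormedAddCommGroup F] [NormedSpace 𝕜 F]
  [Fintype ι] [DecidableEq ι]

theorem HasFDerivAt.hasDerivAt_update {f : (ι → 𝕜) → F} {f' : (ι → 𝕜) →L[𝕜] F} {x : ι → 𝕜}
    (hf : HasFDerivAt f f' x) (i : ι) :
    HasDerivAt (fun t => f (update x i t)) (f' (Pi.single i 1)) (x i) := by
  rw [← update_eq_self i x] at hf
  exact hf.comp_hasDerivAt (x i) (_root_.hasDerivAt_update x i (x i))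

theorem hasDerivAt_sum_update {g : ι → 𝕜 → F} {g' : F} (x : ι → 𝕜) (i : ι)
    (hg : HasDerivAt (g i) g' (x i)) :
    HasDerivAt (fun t => ∑ k, g k (update x i t k)) g' (x i) := by
  have hsplit : (fun t => ∑ k, g k (update x i t k))
      = fun t => g i t + ∑ k ∈ univ.erase i, g k (x k) := by
    funext t
    rw [← add_sum_erase _ _ (mem_univ i), update_self]
    congr 1
    exact sum_congr rfl fun k hk => by rw [update_of_ne (ne_of_mem_erase hk)]
  rw [hsplit]
  exact hg.add_const _

end PartialDerivative

section GainPerShot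

variable {ι : Type*} [Fintype ι]

noncomputable def gainPerShot (C c : ℝ) (w x : ι → ℝ) : ℝ :=
  (C - c * ∑ k, w k / x k) / ∑ k, x k

theorem differentiableAt_gainPerShot (C c : ℝ) (w : ι → ℝ) {s : ι → ℝ} (hs : ∀ k, s k ≠ 0)
    (hT : ∑ k, s k ≠ 0) : DifferentiableAt ℝ (gainPerShot C c w) s := by
  unfold gainPerShot
  fun_prop (disch := first | exact hT | exact hs _)

variable [DecidableEq ι]

theorem gainPerShot_critical_point_eq (C c : ℝ) (w : ι → ℝ) {s : ι → ℝ} (hs : ∀ k, 0 < s k)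
    (hcrit : fderiv ℝ (gainPerShot C c w) s = 0) (i : ι) :
    c * w i * ∑ k, s k = (C - c * ∑ k, w k / s k) * s i ^ 2 := by
  have hT : 0 < ∑ k, s k := sum_pos (fun k _ => hs k) ⟨i, mem_univ i⟩
  have hzero : HasDerivAt (fun t => gainPerShot C c w (update s i t)) 0 (s i) := by
    simpa [hcrit] using (differentiableAt_gainPerShot C c w (fun k => (hs k).ne')
      hT.ne').hasFDerivAt.hasDerivAt_update i
  have hnum : HasDerivAt (fun t : ℝ => C - c * ∑ k, w k / update s i t k)
      (-(c * (w i * -(s i ^ 2)⁻¹))) (s i) :=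
    ((hasDerivAt_sum_update (g := fun k y => w k / y) s i
      (by simpa [div_eq_mul_inv] using (hasDerivAt_inv (hs i).ne').const_mul (w i))).const_mul
      c).const_sub C
  have hden : HasDerivAt (fun t : ℝ => ∑ k, update s i t k) 1 (s i) :=
    hasDerivAt_sum_update (g := fun _ y => y) s i (hasDerivAt_id _)
  have hpartial := hzero.unique (hnum.fun_div hden (by simpa using hT.ne'))
  simp only [update_eq_self] at hpartial
  field_simp at hpartial
  rwa [zero_mul, eq_comm, sub_eq_zero, div_eq_iff (pow_ne_zero 2 (hs i).ne')] at hpartial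

theorem gainPerShot_critical_point_mul_sq_eq (C : ℝ) {c : ℝ} (hc : c ≠ 0) (w : ι → ℝ)
    {s : ι → ℝ} (hs : ∀ k, 0 < s k) (hcrit : fderiv ℝ (gainPerShot C c w) s = 0) (j k : ι) :
    w j * s k ^ 2 = w k * s j ^ 2 := by
  have hT : 0 < ∑ k, s k := sum_pos (fun k _ => hs k) ⟨j, mem_univ j⟩
  apply mul_left_cancel₀ (mul_ne_zero hc hT.ne')
  linear_combination s k ^ 2 * gainPerShot_critical_point_eq C c w hs hcrit j
    - s j ^ 2 * gainPerShot_critical_point_eq C c w hs hcrit k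

end GainPerShot

theorem gcans_critical_point_proportional_general
    (d : ℕ) (α L G : ℝ) (hα : 0 < α) (hL : 0 < L)
    (σ : Fin d → ℝ) (hσ : ∀ i, 0 < σ i)
    (γ : (Fin d → ℝ) → ℝ)
    (hγ : γ = fun s => ((α - L * α ^ 2 / 2) * G
        - L * α ^ 2 / 2 * ∑ k, σ k ^ 2 / s k) / ∑ k, s k)
    (s : Fin d → ℝ) (hs : ∀ i, 0 < s i)
    (hcrit : fderiv ℝ γ s = 0) :
    ∀ j k, σ k > 0 → s j / s k = σ j / σ k := by
  intro j k hσk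
  subst hγ
  have hsq := gainPerShot_critical_point_mul_sq_eq ((α - L * α ^ 2 / 2) * G)
    (by positivity : L * α ^ 2 / 2 ≠ 0) (fun k => σ k ^ 2) hs hcrit j k
  rw [div_eq_div_iff (hs k).ne' hσk.ne',
    ← sq_eq_sq₀ (mul_pos (hs j) hσk).le (mul_pos (hσ j) (hs k)).le]
  linear_combination -hsq

/-- **Critical points of the gain-per-shot allocate shots proportionally to the σᵢ.**
At any positive critical point `s` of
`γ(s) = [(α − Lα²/2)G − (Lα²/2) Σₖ σₖ²/sₖ] / (Σₖ sₖ)` we have `sⱼ/sₖ = σⱼ/σₖ`. -/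
theorem gcans_critical_point_proportional
    (d : ℕ) (α L G : ℝ) (hα : 0 < α) (hL : 0 < L) (hLα : L * α < 2) (hG : 0 < G)
    (σ : Fin d → ℝ) (hσ : ∀ i, 0 < σ i)
    (γ : (Fin d → ℝ) → ℝ)
    (hγ : γ = fun s => ((α - L * α ^ 2 / 2) * G
        - L * α ^ 2 / 2 * ∑ k, σ k ^ 2 / s k) / ∑ k, s k)
    (s : Fin d → ℝ) (hs : ∀ i, 0 < s i)
    (hcrit : fderiv ℝ γ s = 0) :
    ∀ j k, σ k > 0 → s j / s k = σ j / σ k :=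
  gcans_critical_point_proportional_general d α L G hα hL σ hσ γ hγ s hs hcrit
end

section
/- Let f : ℝ^d → ℝ have L-Lipschitz continuous gradient, and let the SGD iterate θ' = θ − αg use an unbiased estimator g of ∇f(θ) with component variances σ_i²/s_i, where s_i is given by the gCANS rule s_i = (2Lα/(2−Lα)) σ_i (Σ_j σ_j)/‖∇f(θ)‖². If 0 < α < 1/L, then E[f(θ')] − f(θ) ≤ −(α/4)‖∇f(θ)‖². -/
/-!
The descent lemma `f (x + v) ≤ f x + ⟪∇f x, v⟫ + (L/2)‖v‖²`, applied at `v = -αg` and averaged,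
gives `E f(θ') ≤ f θ - α‖∇f θ‖² + (Lα²/2) E‖g‖²`. By unbiasedness `E‖g‖² = Σ σᵢ²/sᵢ + ‖∇f θ‖²`,
and the gCANS rule makes `σᵢ²/sᵢ` proportional to `σᵢ`, so that the variances sum to
`(2 - Lα)/(2Lα) ‖∇f θ‖²`. Collecting terms leaves `-(α/2)(1 - Lα/2)‖∇f θ‖² ≤ -(α/4)‖∇f θ‖²`.
-/

open MeasureTheory ProbabilityTheory
open scoped RealInnerProductSpace

section Descent

variable {E : Type*} [NormedAddCommGroup E] [InnerProductSpace ℝ E] [CompleteSpace E]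
  {f : E → ℝ} {L : ℝ}

theorem le_add_inner_gradient_add_of_lipschitz_gradient (hf : Differentiable ℝ f)
    (hlip : ∀ x y, ‖gradient f x - gradient f y‖ ≤ L * ‖x - y‖) (x v : E) :
    f (x + v) ≤ f x + ⟪gradient f x, v⟫ + L / 2 * ‖v‖ ^ 2 := by
  set ψ : ℝ → ℝ := fun t => f (x + t • v) - t * ⟪gradient f x, v⟫ - L / 2 * t ^ 2 * ‖v‖ ^ 2
  have hline (t : ℝ) : HasDerivAt (fun t : ℝ => x + t • v) v t := by
    simpa using ((hasDerivAt_id t).smul_const v).const_add x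
  have hψ (t : ℝ) : HasDerivAt ψ
      (⟪gradient f (x + t • v) - gradient f x, v⟫ - L * t * ‖v‖ ^ 2) t := by
    have hft : HasDerivAt (fun t : ℝ => f (x + t • v)) ⟪gradient f (x + t • v), v⟫ t :=
      (hf _).hasGradientAt.hasFDerivAt.comp_hasDerivAt t (hline t)
    refine ((hft.sub ((hasDerivAt_id t).mul_const ⟪gradient f x, v⟫)).sub
      (((hasDerivAt_pow 2 t).const_mul (L / 2)).mul_const (‖v‖ ^ 2))).congr_deriv ?_
    simp only [inner_sub_left, Nat.cast_ofNat]
    ring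
  have hψ_nonpos (t : ℝ) (ht : 0 ≤ t) :
      ⟪gradient f (x + t • v) - gradient f x, v⟫ - L * t * ‖v‖ ^ 2 ≤ 0 := by
    have := calc ⟪gradient f (x + t • v) - gradient f x, v⟫
        ≤ ‖gradient f (x + t • v) - gradient f x‖ * ‖v‖ := real_inner_le_norm _ _
      _ ≤ L * ‖t • v‖ * ‖v‖ := by gcongr; simpa using hlip (x + t • v) x
      _ = L * t * ‖v‖ ^ 2 := by rw [norm_smul, Real.norm_of_nonneg ht]; ring
    linarith
  have hanti : AntitoneOn ψ (Set.Ici 0) := by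
    refine antitoneOn_of_hasDerivWithinAt_nonpos (convex_Ici 0)
      (fun t _ => (hψ t).continuousAt.continuousWithinAt) (fun t _ => (hψ t).hasDerivWithinAt)
      (fun t ht => hψ_nonpos t ?_)
    rw [interior_Ici] at ht
    exact le_of_lt ht
  have h01 : ψ 1 ≤ ψ 0 := hanti Set.self_mem_Ici (Set.mem_Ici.2 zero_le_one) zero_le_one
  simp only [ψ, one_smul, zero_smul, add_zero, one_mul, zero_mul, one_pow, mul_one,
    ne_eq, OfNat.ofNat_ne_zero, not_false_eq_true, zero_pow, mul_zero, sub_zero] at h01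
  linarith

end Descent

section Moments

variable {Ω ι : Type*} [MeasurableSpace Ω] {μ : Measure Ω} [IsProbabilityMeasure μ] [Fintype ι]

theorem integral_norm_sq_eq_sum_variance_add {g : Ω → EuclideanSpace ℝ ι} (hg : MemLp g 2 μ) :
    ∫ ω, ‖g ω‖ ^ 2 ∂μ = ∑ i, Var[fun ω => g ω i; μ] + ‖∫ ω, g ω ∂μ‖ ^ 2 := by
  have hgi : ∀ i, MemLp (fun ω => g ω i) 2 μ := hg.eval_piLp
  simp_rw [EuclideanSpace.real_norm_sq_eq,
    eval_integral_piLp (fun i => (hgi i).integrable one_le_two),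
    integral_finsetSum _ (fun i _ => (hgi i).integrable_sq), ← Finset.sum_add_distrib,
    variance_eq_sub (hgi _)]
  simp [Pi.pow_apply]

end Moments

section SGDStep

variable {Ω E : Type*} [MeasurableSpace Ω] {μ : Measure Ω} [IsProbabilityMeasure μ]
  [NormedAddCommGroup E] [InnerProductSpace ℝ E] [CompleteSpace E] {f : E → ℝ} {L : ℝ}

theorem integral_comp_sub_smul_le_of_lipschitz_gradient (hf : Differentiable ℝ f)
    (hlip : ∀ x y, ‖gradient f x - gradient f y‖ ≤ L * ‖x - y‖) (θ : E) (α : ℝ)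
    {g : Ω → E} (hg : Integrable g μ) (hg_sq : Integrable (fun ω => ‖g ω‖ ^ 2) μ)
    (hfg : Integrable (fun ω => f (θ - α • g ω)) μ) :
    ∫ ω, f (θ - α • g ω) ∂μ
      ≤ f θ - α * ⟪gradient f θ, ∫ ω, g ω ∂μ⟫ + L / 2 * α ^ 2 * ∫ ω, ‖g ω‖ ^ 2 ∂μ := by
  have hpt (ω : Ω) : f (θ - α • g ω)
      ≤ f θ - α * ⟪gradient f θ, g ω⟫ + L / 2 * α ^ 2 * ‖g ω‖ ^ 2 := by
    have := le_add_inner_gradient_add_of_lipschitz_gradient hf hlip θ (-(α • g ω))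
    rwa [← sub_eq_add_neg, inner_neg_right, real_inner_smul_right, norm_neg, norm_smul,
      mul_pow, Real.norm_eq_abs, sq_abs, ← sub_eq_add_neg, ← mul_assoc] at this
  have hinner : Integrable (fun ω => α * ⟪gradient f θ, g ω⟫) μ :=
    ((innerSL ℝ (gradient f θ)).integrable_comp hg).const_mul α
  have hlin : Integrable (fun ω => f θ - α * ⟪gradient f θ, g ω⟫) μ :=
    (integrable_const _).sub hinner
  have hquad : Integrable (fun ω => L / 2 * α ^ 2 * ‖g ω‖ ^ 2) μ := hg_sq.const_mul _
  calc ∫ ω, f (θ - α • g ω) ∂μ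
      ≤ ∫ ω, (f θ - α * ⟪gradient f θ, g ω⟫ + L / 2 * α ^ 2 * ‖g ω‖ ^ 2) ∂μ :=
        integral_mono hfg (hlin.add hquad) hpt
    _ = f θ - α * ⟪gradient f θ, ∫ ω, g ω ∂μ⟫ + L / 2 * α ^ 2 * ∫ ω, ‖g ω‖ ^ 2 ∂μ := by
        rw [integral_add hlin hquad, integral_sub (integrable_const _) hinner,
          integral_const_mul, integral_const_mul, integral_inner hg]
        simp

end SGDStep

section Shots

variable {ι : Type*} [Fintype ι]

-- In the paper `c = 2Lα/(2 - Lα)` and `N = ‖∇f θ‖²`.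
noncomputable def gcansShots (c : ℝ) (σ : ι → ℝ) (N : ℝ) (i : ι) : ℝ := c * (σ i * ∑ j, σ j) / N

theorem sum_sq_div_gcansShots_le (σ : ι → ℝ) {c N : ℝ} (hc : 0 ≤ c) (hN : 0 ≤ N) :
    ∑ i, σ i ^ 2 / gcansShots c σ N i ≤ N / c := by
  have hterm (i : ι) : σ i ^ 2 / gcansShots c σ N i = σ i * (N / (c * ∑ j, σ j)) := by
    rw [gcansShots, div_div_eq_mul_div]
    -- for `σ i = 0` both sides vanish, thanks to `x / 0 = 0`
    rcases eq_or_ne (σ i) 0 with h | h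
    · simp [h]
    · field_simp
  rw [Finset.sum_congr rfl fun i _ => hterm i, ← Finset.sum_mul]
  generalize ∑ j, σ j = S
  rcases eq_or_ne S 0 with hS | hS
  · rw [hS, zero_mul]
    positivity
  · exact (by field_simp : S * (N / (c * S)) = N / c).le

end Shots

theorem gcans_one_step_descent_general
    (d : ℕ) (f : EuclideanSpace ℝ (Fin d) → ℝ) (L : ℝ)
    (hdiff : Differentiable ℝ f)
    (hlip : ∀ x y : EuclideanSpace ℝ (Fin d),
      ‖gradient f x - gradient f y‖ ≤ L * ‖x - y‖)
    {Ω : Type*} [MeasurableSpace Ω] (μ : Measure Ω) [IsProbabilityMeasure μ]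
    (θ : EuclideanSpace ℝ (Fin d)) (g : Ω → EuclideanSpace ℝ (Fin d))
    (σ : Fin d → ℝ) (s : Fin d → ℝ) (α : ℝ)
    (hα : 0 < α) (hαL : α < 1 / L)
    (hg_int : Integrable g μ)
    (hg_sq_int : Integrable (fun ω => ‖g ω‖ ^ 2) μ)
    (hf_int : Integrable (fun ω => f (θ - α • g ω)) μ)
    (hmean : ∀ i, (∫ ω, g ω i ∂μ) = gradient f θ i)
    (hvar : ∀ i, (∫ ω, (g ω i - gradient f θ i) ^ 2 ∂μ) = σ i ^ 2 / s i)
    (hs : ∀ i, s i = 2 * L * α / (2 - L * α) * (σ i * ∑ j, σ j) / ‖gradient f θ‖ ^ 2) :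
    (∫ ω, f (θ - α • g ω) ∂μ) - f θ ≤ -(α / 4) * ‖gradient f θ‖ ^ 2 := by
  have hL : 0 < L := one_div_pos.mp (hα.trans hαL)
  have hLα : L * α < 1 := by rwa [lt_div_iff₀ hL, mul_comm] at hαL
  have hg_L2 : MemLp g 2 μ := (memLp_two_iff_integrable_sq_norm hg_int.1).2 hg_sq_int
  have hEg : ∫ ω, g ω ∂μ = gradient f θ := by
    ext i
    rw [eval_integral_piLp hg_int.eval_piLp i, hmean]
  have hVar (i : Fin d) : Var[fun ω => g ω i; μ] = σ i ^ 2 / s i := by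
    rw [variance_eq_integral (hg_L2.eval_piLp i).aemeasurable, hmean, hvar]
  have hc : 0 < 2 * L * α / (2 - L * α) := div_pos (by positivity) (by linarith)
  have hshots : ∑ i, σ i ^ 2 / s i ≤ ‖gradient f θ‖ ^ 2 / (2 * L * α / (2 - L * α)) := by
    simp only [hs]
    exact sum_sq_div_gcansShots_le σ hc.le (by positivity)
  have hstep :=
    integral_comp_sub_smul_le_of_lipschitz_gradient hdiff hlip θ α hg_int hg_sq_int hf_int
  rw [integral_norm_sq_eq_sum_variance_add hg_L2, hEg, real_inner_self_eq_norm_sq] at hstep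
  simp only [hVar] at hstep
  calc ∫ ω, f (θ - α • g ω) ∂μ - f θ
      ≤ -α * ‖gradient f θ‖ ^ 2 + L / 2 * α ^ 2 *
          (‖gradient f θ‖ ^ 2 / (2 * L * α / (2 - L * α)) + ‖gradient f θ‖ ^ 2) := by
        nlinarith [mul_le_mul_of_nonneg_left hshots (by positivity : 0 ≤ L / 2 * α ^ 2)]
    _ = -(α / 4) * ‖gradient f θ‖ ^ 2 - α / 4 * (1 - L * α) * ‖gradient f θ‖ ^ 2 := by
        field_simp
        ring
    _ ≤ -(α / 4) * ‖gradient f θ‖ ^ 2 :=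
        sub_le_self _ (mul_nonneg (mul_nonneg (by positivity) (by linarith)) (sq_nonneg _))

/-- **Expected descent of one gCANS step.** With an unbiased gradient estimator whose
component variances are `σᵢ²/sᵢ` and shots chosen by the gCANS rule, a step of size
`0 < α < 1/L` satisfies `E[f(θ − αg)] − f(θ) ≤ −(α/4)‖∇f θ‖²`. -/
theorem gcans_one_step_descent
    (d : ℕ) (f : EuclideanSpace ℝ (Fin d) → ℝ) (L : ℝ) (hL : 0 < L)
    (hdiff : Differentiable ℝ f)
    (hlip : ∀ x y : EuclideanSpace ℝ (Fin d),
      ‖gradient f x - gradient f y‖ ≤ L * ‖x - y‖)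
    {Ω : Type*} [MeasurableSpace Ω] (μ : Measure Ω) [IsProbabilityMeasure μ]
    (θ : EuclideanSpace ℝ (Fin d)) (g : Ω → EuclideanSpace ℝ (Fin d))
    (σ : Fin d → ℝ) (s : Fin d → ℝ) (α : ℝ)
    (hα : 0 < α) (hαL : α < 1 / L)
    (hσ : ∀ i, 0 ≤ σ i) (hσpos : ∃ i, 0 < σ i)
    (hgrad : gradient f θ ≠ 0)
    (hg_int : Integrable g μ)
    (hg_sq_int : Integrable (fun ω => ‖g ω‖ ^ 2) μ)
    (hf_int : Integrable (fun ω => f (θ - α • g ω)) μ)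
    (hmean : ∀ i, (∫ ω, g ω i ∂μ) = gradient f θ i)
    (hvar : ∀ i, (∫ ω, (g ω i - gradient f θ i) ^ 2 ∂μ) = σ i ^ 2 / s i)
    (hs : ∀ i, s i = 2 * L * α / (2 - L * α) * (σ i * ∑ j, σ j) / ‖gradient f θ‖ ^ 2) :
    (∫ ω, f (θ - α • g ω) ∂μ) - f θ ≤ -(α / 4) * ‖gradient f θ‖ ^ 2 :=
  gcans_one_step_descent_general d f L hdiff hlip μ θ g σ s α hα hαL hg_int hg_sq_int hf_int hmean
    hvar hs
end

section
/- Let f : ℝ^d → ℝ be μ-strongly convex with L-Lipschitz gradient, with minimum f*, and suppose SGD with constant learning rate 0 < α < min{1/L, 2/μ} uses unbiased gradient estimators with component variances Var[g_i^{(k)}] = σ_i^{(k)2}/s_i^{(k)} chosen by the gCANS rule at every iteration. Then there exist constants R ≥ 0 and 0 < γ < 1 such that E[f(θ^{(k)})] − f* ≤ R γ^k for all k, i.e., E[f(θ^{(k)})] − f* = O(γ^k). -/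
/-!
By the descent lemma, an SGD step decreases `f` in expectation up to the second moment of the
estimator: `E f(θₖ₊₁) ≤ E f(θₖ) - α E⟪∇f, g⟫ + Lα²/2 · E‖g‖²`. Unbiasedness turns `E⟪∇f, g⟫`
into `E‖∇f‖²` and splits `E‖g‖²` into `E‖∇f‖²` plus the total variance `E ∑ᵢ σᵢ²/sᵢ`, which the
gCANS rule caps at `(2 - Lα)/(2Lα) · ‖∇f‖²`. Hence each step gains at least
`α(2 - Lα)/4 · E‖∇f‖²`, and the Polyak–Łojasiewicz inequality `‖∇f‖² ≥ 2μ(f - f*)` of strongly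
convex functions turns this into the contraction `E f(θₖ₊₁) - f* ≤ (1 - αμ/2)(E f(θₖ) - f*)`.
-/

open MeasureTheory ProbabilityTheory Real
open scoped BigOperators

section Smooth

variable {E : Type*} [NormedAddCommGroup E] [InnerProductSpace ℝ E] [CompleteSpace E]
  {f : E → ℝ} {L : ℝ}

theorem descent_lemma (hdiff : Differentiable ℝ f)
    (hlip : ∀ x y, ‖gradient f x - gradient f y‖ ≤ L * ‖x - y‖) (x y : E) :
    f y ≤ f x + inner ℝ (gradient f x) (y - x) + L / 2 * ‖y - x‖ ^ 2 := by
  set v := y - x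
  set φ : ℝ → ℝ := fun t => f (x + t • v) - t * inner ℝ (gradient f x) v - L / 2 * t ^ 2 * ‖v‖ ^ 2
  have hφ' : ∀ t, HasDerivAt φ
      (inner ℝ (gradient f (x + t • v) - gradient f x) v - L * t * ‖v‖ ^ 2) t := by
    intro t
    have hline : HasDerivAt (fun t : ℝ => x + t • v) v t := by
      simpa using ((hasDerivAt_id t).smul_const v).const_add x
    have hf := (hdiff (x + t • v)).hasGradientAt.hasFDerivAt.comp_hasDerivAt t hline
    rw [InnerProductSpace.toDual_apply_apply] at hf
    refine ((hf.sub ((hasDerivAt_id t).mul_const _)).sub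
      (((hasDerivAt_pow 2 t).const_mul (L / 2)).mul_const (‖v‖ ^ 2))).congr_deriv ?_
    rw [inner_sub_left]
    push_cast
    ring
  have hanti : AntitoneOn φ (Set.Ici 0) := by
    refine antitoneOn_of_hasDerivWithinAt_nonpos (convex_Ici 0)
      (fun t _ => (hφ' t).continuousAt.continuousWithinAt) (fun t _ => (hφ' t).hasDerivWithinAt) ?_
    intro t ht
    rw [interior_Ici, Set.mem_Ioi] at ht
    have hlip_t : ‖gradient f (x + t • v) - gradient f x‖ ≤ L * (t * ‖v‖) := by
      simpa [norm_smul, abs_of_pos ht] using hlip (x + t • v) x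
    nlinarith [real_inner_le_norm (gradient f (x + t • v) - gradient f x) v,
      mul_le_mul_of_nonneg_right hlip_t (norm_nonneg v)]
  have h01 : φ 1 ≤ φ 0 := hanti (Set.mem_Ici.2 le_rfl) (Set.mem_Ici.2 zero_le_one) zero_le_one
  simp only [φ, one_smul, zero_smul, add_zero, v, add_sub_cancel] at h01
  linarith

theorem sq_norm_gradient_le_of_forall_le (hL : 0 < L) (hdiff : Differentiable ℝ f)
    (hlip : ∀ x y, ‖gradient f x - gradient f y‖ ≤ L * ‖x - y‖) {fstar : ℝ}
    (hmin : ∀ x, fstar ≤ f x) (x : E) :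
    ‖gradient f x‖ ^ 2 ≤ 2 * L * (f x - fstar) := by
  have h := descent_lemma hdiff hlip x (x - L⁻¹ • gradient f x)
  rw [sub_sub_cancel_left, inner_neg_right, real_inner_smul_right, real_inner_self_eq_norm_sq,
    norm_neg, norm_smul, Real.norm_of_nonneg (inv_nonneg.2 hL.le)] at h
  have hdecrease : L⁻¹ * ‖gradient f x‖ ^ 2 / 2 ≤ f x - fstar := by
    have : L / 2 * (L⁻¹ * ‖gradient f x‖) ^ 2 = L⁻¹ * ‖gradient f x‖ ^ 2 / 2 := by
      field_simp
    linarith [hmin (x - L⁻¹ • gradient f x)]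
  calc ‖gradient f x‖ ^ 2 = 2 * L * (L⁻¹ * ‖gradient f x‖ ^ 2 / 2) := by field_simp
    _ ≤ 2 * L * (f x - fstar) := by gcongr

theorem polyak_lojasiewicz_of_strongly_convex {μ : ℝ} (hμ : 0 < μ)
    (hconv : ∀ x y, f y ≥ f x + inner ℝ (gradient f x) (y - x) + μ / 2 * ‖y - x‖ ^ 2) (x y : E) :
    2 * μ * (f x - f y) ≤ ‖gradient f x‖ ^ 2 := by
  have hexpand := norm_add_sq_real (gradient f x) (μ • (y - x))
  rw [real_inner_smul_right, norm_smul, Real.norm_of_nonneg hμ.le, mul_pow] at hexpand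
  nlinarith [sq_nonneg ‖gradient f x + μ • (y - x)‖,
    mul_le_mul_of_nonneg_left (hconv x y) (by positivity : 0 ≤ 2 * μ)]

theorem continuous_gradient_of_lipschitz
    (hlip : ∀ x y, ‖gradient f x - gradient f y‖ ≤ L * ‖x - y‖) : Continuous (gradient f) :=
  (LipschitzWith.of_dist_le' fun x y => by simpa only [dist_eq_norm] using hlip x y).continuous

end Smooth

theorem sum_sq_div_gcans_le {ι : Type*} [Fintype ι] (σ : ι → ℝ) {c N : ℝ} (hc : 0 ≤ c)
    (hN : 0 ≤ N) : ∑ i, σ i ^ 2 / (c * (σ i * ∑ j, σ j) / N) ≤ c⁻¹ * N := by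
  set S := ∑ j, σ j
  -- thanks to `x / 0 = 0` this also holds when `σ i`, `S` or `N` vanishes
  have hterm : ∀ i, σ i ^ 2 / (c * (σ i * S) / N) = σ i * (N / (c * S)) := by
    intro i
    rcases eq_or_ne (σ i) 0 with h | h
    · simp [h]
    · rw [show c * (σ i * S) / N = σ i * (c * S / N) by ring, sq, mul_div_mul_left _ _ h,
        div_div_eq_mul_div, mul_div_assoc]
  calc ∑ i, σ i ^ 2 / (c * (σ i * S) / N) = S / S * (c⁻¹ * N) := by
        rw [Finset.sum_congr rfl fun i _ => hterm i, ← Finset.sum_mul]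
        ring
    _ ≤ c⁻¹ * N := mul_le_of_le_one_left (by positivity) (div_self_le_one S)

section ConditionalMoments

variable {Ω ι : Type*} [Fintype ι] {m m₀ : MeasurableSpace Ω} {μ : Measure Ω}

theorem memLp_two_apply {X : Ω → EuclideanSpace ℝ ι} (hX : MemLp X 2 μ) (i : ι) :
    MemLp (fun ω => X ω i) 2 μ :=
  (EuclideanSpace.proj (𝕜 := ℝ) i).comp_memLp' hX

variable [IsFiniteMeasure μ]

theorem integral_mul_eq_integral_sq_of_condExp_eq (hm : m ≤ m₀) {X G : Ω → ℝ}
    (hG : StronglyMeasurable[m] G) (hX : MemLp X 2 μ) (hG2 : MemLp G 2 μ)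
    (hXG : μ[X|m] =ᵐ[μ] G) : ∫ ω, G ω * X ω ∂μ = ∫ ω, G ω ^ 2 ∂μ := by
  have hpull : μ[G * X|m] =ᵐ[μ] G * G :=
    (condExp_mul_of_stronglyMeasurable_left hG (hG2.integrable_mul hX)
      (hX.integrable one_le_two)).trans (hXG.mono fun ω hω => by simp only [Pi.mul_apply, hω])
  calc ∫ ω, G ω * X ω ∂μ = ∫ ω, μ[G * X|m] ω ∂μ := (integral_condExp hm).symm
    _ = ∫ ω, G ω ^ 2 ∂μ := by simp_rw [integral_congr_ae hpull, Pi.mul_apply, sq]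

theorem integral_sq_eq_integral_sq_sub_add_of_condExp_eq (hm : m ≤ m₀) {X G : Ω → ℝ}
    (hG : StronglyMeasurable[m] G) (hX : MemLp X 2 μ) (hG2 : MemLp G 2 μ)
    (hXG : μ[X|m] =ᵐ[μ] G) :
    ∫ ω, X ω ^ 2 ∂μ = ∫ ω, (X ω - G ω) ^ 2 ∂μ + ∫ ω, G ω ^ 2 ∂μ := by
  have hcross := integral_mul_eq_integral_sq_of_condExp_eq hm hG hX hG2 hXG
  have hGX : Integrable (fun ω => G ω * X ω) μ := hG2.integrable_mul hX
  have hcentred : Integrable (fun ω => 2 * (G ω * X ω) - G ω ^ 2) μ :=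
    (hGX.const_mul 2).sub hG2.integrable_sq
  have hexpand : (fun ω => (X ω - G ω) ^ 2)
      = fun ω => X ω ^ 2 - (2 * (G ω * X ω) - G ω ^ 2) := by
    funext ω; ring
  rw [hexpand, integral_sub hX.integrable_sq hcentred,
    integral_sub (hGX.const_mul 2) hG2.integrable_sq, integral_const_mul,
    hcross]
  ring

theorem integral_inner_eq_integral_norm_sq_of_condExp_eq (hm : m ≤ m₀)
    {X G : Ω → EuclideanSpace ℝ ι} (hG : StronglyMeasurable[m] G) (hX : MemLp X 2 μ)
    (hG2 : MemLp G 2 μ) (hXG : ∀ i, μ[fun ω => X ω i|m] =ᵐ[μ] fun ω => G ω i) :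
    ∫ ω, inner ℝ (G ω) (X ω) ∂μ = ∫ ω, ‖G ω‖ ^ 2 ∂μ := by
  simp only [PiLp.inner_apply, RCLike.inner_apply, conj_trivial, EuclideanSpace.norm_sq_eq,
    Real.norm_eq_abs, sq_abs]
  have hprod : ∀ i, Integrable (fun ω => X ω i * G ω i) μ := fun i =>
    (memLp_two_apply hX i).integrable_mul (memLp_two_apply hG2 i)
  rw [integral_finsetSum _ fun i _ => hprod i,
    integral_finsetSum _ fun i _ => (memLp_two_apply hG2 i).integrable_sq]
  refine Finset.sum_congr rfl fun i _ => ?_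
  simp_rw [mul_comm (X _ i)]
  exact integral_mul_eq_integral_sq_of_condExp_eq hm
    ((EuclideanSpace.proj i).continuous.comp_stronglyMeasurable hG) (memLp_two_apply hX i)
    (memLp_two_apply hG2 i) (hXG i)

theorem integral_norm_sq_eq_sum_integral_sq_sub_add_of_condExp_eq (hm : m ≤ m₀)
    {X G : Ω → EuclideanSpace ℝ ι} (hG : StronglyMeasurable[m] G) (hX : MemLp X 2 μ)
    (hG2 : MemLp G 2 μ) (hXG : ∀ i, μ[fun ω => X ω i|m] =ᵐ[μ] fun ω => G ω i) :
    ∫ ω, ‖X ω‖ ^ 2 ∂μ = ∑ i, ∫ ω, (X ω i - G ω i) ^ 2 ∂μ + ∫ ω, ‖G ω‖ ^ 2 ∂μ := by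
  simp only [EuclideanSpace.norm_sq_eq, Real.norm_eq_abs, sq_abs]
  rw [integral_finsetSum _ fun i _ => (memLp_two_apply hX i).integrable_sq,
    integral_finsetSum _ fun i _ => (memLp_two_apply hG2 i).integrable_sq, ← Finset.sum_add_distrib]
  exact Finset.sum_congr rfl fun i _ => integral_sq_eq_integral_sq_sub_add_of_condExp_eq hm
    ((EuclideanSpace.proj i).continuous.comp_stronglyMeasurable hG) (memLp_two_apply hX i)
    (memLp_two_apply hG2 i) (hXG i)

end ConditionalMoments

section StochasticGradient

variable {Ω E : Type*} [NormedAddCommGroup E] [InnerProductSpace ℝ E] {m₀ : MeasurableSpace Ω}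
  {μ : Measure Ω}

theorem integrable_inner_of_memLp_two {F G : Ω → E} (hF : MemLp F 2 μ) (hG : MemLp G 2 μ) :
    Integrable (fun ω => inner ℝ (F ω) (G ω)) μ :=
  (L2.integrable_inner (𝕜 := ℝ) (hF.toLp F) (hG.toLp G)).congr <| by
    filter_upwards [hF.coeFn_toLp, hG.coeFn_toLp] with ω hFω hGω
    rw [hFω, hGω]

variable [CompleteSpace E] {f : E → ℝ} {L : ℝ}

theorem memLp_two_gradient_comp [IsFiniteMeasure μ] (hL : 0 < L) (hdiff : Differentiable ℝ f)
    (hlip : ∀ x y, ‖gradient f x - gradient f y‖ ≤ L * ‖x - y‖) {fstar : ℝ}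
    (hmin : ∀ x, fstar ≤ f x) {θ : Ω → E} (hθ : AEStronglyMeasurable θ μ)
    (hfθ : Integrable (fun ω => f (θ ω)) μ) : MemLp (fun ω => gradient f (θ ω)) 2 μ := by
  have hGm := (continuous_gradient_of_lipschitz hlip).comp_aestronglyMeasurable hθ
  refine (memLp_two_iff_integrable_sq_norm hGm).2 <|
    ((hfθ.sub (integrable_const fstar)).const_mul (2 * L)).mono' (hGm.norm.pow 2) ?_
  refine ae_of_all _ fun ω => ?_
  rw [Real.norm_of_nonneg (sq_nonneg _)]
  exact sq_norm_gradient_le_of_forall_le hL hdiff hlip hmin (θ ω)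

theorem integral_le_of_gradient_step (hdiff : Differentiable ℝ f)
    (hlip : ∀ x y, ‖gradient f x - gradient f y‖ ≤ L * ‖x - y‖) {θ θ' g : Ω → E} {α : ℝ}
    (hupdate : ∀ ω, θ' ω = θ ω - α • g ω) (hfθ : Integrable (fun ω => f (θ ω)) μ)
    (hfθ' : Integrable (fun ω => f (θ' ω)) μ)
    (hinner : Integrable (fun ω => inner ℝ (gradient f (θ ω)) (g ω)) μ)
    (hg : Integrable (fun ω => ‖g ω‖ ^ 2) μ) :
    ∫ ω, f (θ' ω) ∂μ ≤ ∫ ω, f (θ ω) ∂μ - α * ∫ ω, inner ℝ (gradient f (θ ω)) (g ω) ∂μ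
      + L / 2 * α ^ 2 * ∫ ω, ‖g ω‖ ^ 2 ∂μ := by
  have hpoint : ∀ ω, f (θ' ω) ≤ f (θ ω) - α * inner ℝ (gradient f (θ ω)) (g ω)
      + L / 2 * α ^ 2 * ‖g ω‖ ^ 2 := by
    intro ω
    have h := descent_lemma hdiff hlip (θ ω) (θ' ω)
    rw [hupdate, sub_sub_cancel_left, inner_neg_right, real_inner_smul_right, norm_neg, norm_smul,
      mul_pow, Real.norm_eq_abs, sq_abs] at h
    rw [hupdate]
    linarith
  have hrhs : Integrable (fun ω => f (θ ω) - α * inner ℝ (gradient f (θ ω)) (g ω)) μ :=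
    hfθ.sub (hinner.const_mul α)
  calc ∫ ω, f (θ' ω) ∂μ ≤ ∫ ω, (f (θ ω) - α * inner ℝ (gradient f (θ ω)) (g ω)
        + L / 2 * α ^ 2 * ‖g ω‖ ^ 2) ∂μ :=
        integral_mono hfθ' (hrhs.add (hg.const_mul _)) hpoint
    _ = _ := by
      rw [integral_add hrhs (hg.const_mul _), integral_sub hfθ (hinner.const_mul α),
        integral_const_mul, integral_const_mul]

end StochasticGradient

section GCANS

variable {Ω ι : Type*} [Fintype ι] {m m₀ : MeasurableSpace Ω} {P : Measure Ω}

theorem sum_integral_sq_sub_le_of_gcans [IsFiniteMeasure P] (hm : m ≤ m₀)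
    {X G : Ω → EuclideanSpace ℝ ι} {σ s : ι → Ω → ℝ} {c : ℝ} (hc : 0 ≤ c)
    (hG : Integrable (fun ω => ‖G ω‖ ^ 2) P)
    (hvar : ∀ i, P[fun ω => (X ω i - G ω i) ^ 2|m] =ᵐ[P] fun ω => σ i ω ^ 2 / s i ω)
    (hshot : ∀ i, ∀ᵐ ω ∂P, s i ω = c * (σ i ω * ∑ j, σ j ω) / ‖G ω‖ ^ 2) :
    ∑ i, ∫ ω, (X ω i - G ω i) ^ 2 ∂P ≤ c⁻¹ * ∫ ω, ‖G ω‖ ^ 2 ∂P := by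
  have hint : ∀ i, Integrable (fun ω => σ i ω ^ 2 / s i ω) P := fun i =>
    integrable_condExp.congr (hvar i)
  calc ∑ i, ∫ ω, (X ω i - G ω i) ^ 2 ∂P = ∫ ω, ∑ i, σ i ω ^ 2 / s i ω ∂P := by
        rw [integral_finsetSum _ fun i _ => hint i]
        exact Finset.sum_congr rfl fun i _ =>
          (integral_condExp hm).symm.trans (integral_congr_ae (hvar i))
    _ ≤ ∫ ω, c⁻¹ * ‖G ω‖ ^ 2 ∂P := by
      refine integral_mono_ae (integrable_finsetSum _ fun i _ => hint i) (hG.const_mul _) ?_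
      filter_upwards [ae_all_iff.2 hshot] with ω hs
      simp only [hs]
      exact sum_sq_div_gcans_le _ hc (sq_nonneg _)
    _ = c⁻¹ * ∫ ω, ‖G ω‖ ^ 2 ∂P := integral_const_mul _ _

theorem gcans_expected_descent [IsFiniteMeasure P] (hm : m ≤ m₀)
    {f : EuclideanSpace ℝ ι → ℝ} {L α : ℝ} (hL : 0 < L) (hα : 0 < α) (hLα : L * α < 2)
    (hdiff : Differentiable ℝ f) (hlip : ∀ x y, ‖gradient f x - gradient f y‖ ≤ L * ‖x - y‖)
    {fstar : ℝ} (hmin : ∀ x, fstar ≤ f x) {θ θ' g : Ω → EuclideanSpace ℝ ι} {σ s : ι → Ω → ℝ}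
    (hupdate : ∀ ω, θ' ω = θ ω - α • g ω) (hθ : Measurable[m] θ) (hθ' : Measurable θ')
    (hfθ : Integrable (fun ω => f (θ ω)) P) (hfθ' : Integrable (fun ω => f (θ' ω)) P)
    (hg : Integrable (fun ω => ‖g ω‖ ^ 2) P)
    (hmean : ∀ i, P[fun ω => g ω i|m] =ᵐ[P] fun ω => gradient f (θ ω) i)
    (hvar : ∀ i, P[fun ω => (g ω i - gradient f (θ ω) i) ^ 2|m]
      =ᵐ[P] fun ω => σ i ω ^ 2 / s i ω)
    (hshot : ∀ i, ∀ᵐ ω ∂P, s i ω =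
      2 * L * α / (2 - L * α) * (σ i ω * ∑ j, σ j ω) / ‖gradient f (θ ω)‖ ^ 2) :
    ∫ ω, f (θ' ω) ∂P
      ≤ ∫ ω, f (θ ω) ∂P - α * (2 - L * α) / 4 * ∫ ω, ‖gradient f (θ ω)‖ ^ 2 ∂P := by
  set G := fun ω => gradient f (θ ω)
  have hGm : StronglyMeasurable[m] G :=
    ((continuous_gradient_of_lipschitz hlip).measurable.comp hθ).stronglyMeasurable
  have hG2 : MemLp G 2 P := memLp_two_gradient_comp hL hdiff hlip hmin
    (hθ.mono hm le_rfl).aestronglyMeasurable hfθ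
  have hg2 : MemLp g 2 P := by
    have hg_eq : g = fun ω => α⁻¹ • (θ ω - θ' ω) := by
      funext ω; rw [hupdate, sub_sub_cancel, inv_smul_smul₀ hα.ne']
    refine (memLp_two_iff_integrable_sq_norm ?_).2 hg
    rw [hg_eq]
    exact (((hθ.mono hm le_rfl).sub hθ').const_smul α⁻¹).aestronglyMeasurable
  have hcross := integral_inner_eq_integral_norm_sq_of_condExp_eq hm hGm hg2 hG2 hmean
  have hsecond :=
    integral_norm_sq_eq_sum_integral_sq_sub_add_of_condExp_eq hm hGm hg2 hG2 hmean
  have hvariance := sum_integral_sq_sub_le_of_gcans hm (div_nonneg (by positivity) (by linarith))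
    ((memLp_two_iff_integrable_sq_norm hG2.1).1 hG2) hvar hshot
  have hdescent := integral_le_of_gradient_step hdiff hlip hupdate hfθ hfθ'
    (integrable_inner_of_memLp_two hG2 hg2) hg
  have hcoef : L / 2 * α ^ 2 * (2 * L * α / (2 - L * α))⁻¹ = α * (2 - L * α) / 4 := by
    have : 2 - L * α ≠ 0 := by linarith
    field_simp
    ring
  have hvariance' := mul_le_mul_of_nonneg_left hvariance (by positivity : 0 ≤ L / 2 * α ^ 2)
  rw [← mul_assoc, hcoef] at hvariance'
  rw [hcross, hsecond] at hdescent
  linarith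

theorem gcans_step_contraction [IsProbabilityMeasure P] (hm : m ≤ m₀)
    {f : EuclideanSpace ℝ ι → ℝ} {μc L α : ℝ} (hμc : 0 < μc) (hL : 0 < L) (hα : 0 < α)
    (hLα : L * α < 2) (hdiff : Differentiable ℝ f)
    (hconv : ∀ x y, f y ≥ f x + inner ℝ (gradient f x) (y - x) + μc / 2 * ‖y - x‖ ^ 2)
    (hlip : ∀ x y, ‖gradient f x - gradient f y‖ ≤ L * ‖x - y‖) {xstar : EuclideanSpace ℝ ι}
    (hmin : ∀ x, f xstar ≤ f x) {θ θ' g : Ω → EuclideanSpace ℝ ι} {σ s : ι → Ω → ℝ}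
    (hupdate : ∀ ω, θ' ω = θ ω - α • g ω) (hθ : Measurable[m] θ) (hθ' : Measurable θ')
    (hfθ : Integrable (fun ω => f (θ ω)) P) (hfθ' : Integrable (fun ω => f (θ' ω)) P)
    (hg : Integrable (fun ω => ‖g ω‖ ^ 2) P)
    (hmean : ∀ i, P[fun ω => g ω i|m] =ᵐ[P] fun ω => gradient f (θ ω) i)
    (hvar : ∀ i, P[fun ω => (g ω i - gradient f (θ ω) i) ^ 2|m]
      =ᵐ[P] fun ω => σ i ω ^ 2 / s i ω)
    (hshot : ∀ i, ∀ᵐ ω ∂P, s i ω =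
      2 * L * α / (2 - L * α) * (σ i ω * ∑ j, σ j ω) / ‖gradient f (θ ω)‖ ^ 2) :
    ∫ ω, f (θ' ω) ∂P - f xstar
      ≤ (1 - μc * α * (2 - L * α) / 2) * (∫ ω, f (θ ω) ∂P - f xstar) := by
  have hdescent := gcans_expected_descent hm hL hα hLα hdiff hlip hmin hupdate hθ hθ' hfθ hfθ'
    hg hmean hvar hshot
  have hG2 := memLp_two_gradient_comp hL hdiff hlip hmin
    (hθ.mono hm le_rfl).aestronglyMeasurable hfθ
  have hPL : 2 * μc * (∫ ω, f (θ ω) ∂P - f xstar) ≤ ∫ ω, ‖gradient f (θ ω)‖ ^ 2 ∂P := by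
    have hgap : Integrable (fun ω => f (θ ω) - f xstar) P := hfθ.sub (integrable_const _)
    have h := integral_mono (hgap.const_mul (2 * μc))
      ((memLp_two_iff_integrable_sq_norm hG2.1).1 hG2)
      fun ω => polyak_lojasiewicz_of_strongly_convex hμc hconv (θ ω) xstar
    rwa [integral_const_mul, integral_sub hfθ (integrable_const _), integral_const, probReal_univ,
      one_smul] at h
  nlinarith [mul_le_mul_of_nonneg_left hPL
    (div_nonneg (mul_nonneg hα.le (by linarith)) zero_le_four : 0 ≤ α * (2 - L * α) / 4)]

end GCANS

theorem gcans_geometric_convergence_general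
    (d : ℕ) (f : EuclideanSpace ℝ (Fin d) → ℝ) (μc L : ℝ) (hμc : 0 < μc) (hL : 0 < L)
    (hdiff : Differentiable ℝ f)
    (hconv : ∀ x y : EuclideanSpace ℝ (Fin d),
      f y ≥ f x + (inner ℝ (gradient f x) (y - x) : ℝ) + μc / 2 * ‖y - x‖ ^ 2)
    (hlip : ∀ x y : EuclideanSpace ℝ (Fin d),
      ‖gradient f x - gradient f y‖ ≤ L * ‖x - y‖)
    (fstar : ℝ)
    (hmin : ∃ xstar : EuclideanSpace ℝ (Fin d), f xstar = fstar ∧ ∀ x, fstar ≤ f x)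
    {Ω : Type*} {mΩ : MeasurableSpace Ω} (P : Measure Ω) [IsProbabilityMeasure P]
    (ℱ : Filtration ℕ mΩ)
    (θ : ℕ → Ω → EuclideanSpace ℝ (Fin d))
    (g : ℕ → Ω → EuclideanSpace ℝ (Fin d))
    (σ s : ℕ → Fin d → Ω → ℝ)
    (α : ℝ) (hα : 0 < α) (hαL : α < 1 / L) (hαμ : α < 2 / μc)
    (hupdate : ∀ k ω, θ (k + 1) ω = θ k ω - α • g k ω)
    (hadapted : ∀ k, Measurable[ℱ k] (θ k))
    (hf_int : ∀ k, Integrable (fun ω => f (θ k ω)) P)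
    (hg_sq_int : ∀ k, Integrable (fun ω => ‖g k ω‖ ^ 2) P)
    -- Assumption 1: conditionally unbiased estimators
    (hmean : ∀ k i,
      P[(fun ω => g k ω i)|ℱ k] =ᵐ[P] fun ω => gradient f (θ k ω) i)
    -- Assumption 2: conditional component variances σᵢ²/sᵢ
    (hvar : ∀ k i,
      P[(fun ω => (g k ω i - gradient f (θ k ω) i) ^ 2)|ℱ k]
        =ᵐ[P] fun ω => (σ k i ω) ^ 2 / s k i ω)
    -- Assumption 6: the gCANS shot allocation rule
    (hshot : ∀ k i, ∀ᵐ ω ∂P, s k i ω =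
      2 * L * α / (2 - L * α) * (σ k i ω * ∑ j, σ k j ω)
        / ‖gradient f (θ k ω)‖ ^ 2) :
    ∃ R γ : ℝ, 0 ≤ R ∧ 0 < γ ∧ γ < 1 ∧
      ∀ k, (∫ ω, f (θ k ω) ∂P) - fstar ≤ R * γ ^ k := by
  obtain ⟨xstar, rfl, hmin⟩ := hmin
  have hLα : L * α < 1 := by rwa [lt_div_iff₀ hL, mul_comm] at hαL
  have hαμc : α * μc < 2 := (lt_div_iff₀ hμc).1 hαμ
  set e : ℕ → ℝ := fun k => ∫ ω, f (θ k ω) ∂P - f xstar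
  have he_nonneg : ∀ k, 0 ≤ e k := fun k => sub_nonneg.2 <| by
    simpa using integral_mono (integrable_const (f xstar)) (hf_int k) fun ω => hmin (θ k ω)
  -- `2 - Lα > 1`, so the contraction factor `1 - μα(2 - Lα)/2` is at most `1 - αμ/2`
  have hstep : ∀ k, e (k + 1) ≤ (1 - α * μc / 2) * e k := fun k => by
    have hcontract := gcans_step_contraction (ℱ.le k) hμc hL hα (by linarith) hdiff hconv hlip
      hmin (hupdate k) (hadapted k) ((hadapted (k + 1)).mono (ℱ.le _) le_rfl) (hf_int k)
      (hf_int (k + 1)) (hg_sq_int k) (hmean k) (hvar k) (hshot k)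
    nlinarith [mul_nonneg (mul_nonneg (mul_pos hμc hα).le (by linarith : 0 ≤ 1 - L * α))
      (he_nonneg k)]
  refine ⟨e 0, 1 - α * μc / 2, he_nonneg 0, by linarith, by nlinarith [mul_pos hα hμc],
    fun k => ?_⟩
  simpa only [mul_comm] using le_geom (by linarith) k fun j _ => hstep j

/-- **Theorem 1 (gCANS geometric convergence).** Under strong convexity, Lipschitz
gradients, a constant learning rate `0 < α < min{1/L, 2/μc}`, and conditionally unbiased
gradient estimators whose component variances are `σᵢ^{(k)2}/sᵢ^{(k)}` with shots chosen
by the gCANS rule at every iteration, the SGD iterates converge geometrically: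
`E[f(θ^{(k)})] − f* ≤ R γ^k` for some `R ≥ 0` and `0 < γ < 1`. -/
theorem gcans_geometric_convergence
    (d : ℕ) (f : EuclideanSpace ℝ (Fin d) → ℝ) (μc L : ℝ) (hμc : 0 < μc) (hL : 0 < L)
    (hdiff : Differentiable ℝ f)
    (hconv : ∀ x y : EuclideanSpace ℝ (Fin d),
      f y ≥ f x + (inner ℝ (gradient f x) (y - x) : ℝ) + μc / 2 * ‖y - x‖ ^ 2)
    (hlip : ∀ x y : EuclideanSpace ℝ (Fin d),
      ‖gradient f x - gradient f y‖ ≤ L * ‖x - y‖)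
    (fstar : ℝ)
    (hmin : ∃ xstar : EuclideanSpace ℝ (Fin d), f xstar = fstar ∧ ∀ x, fstar ≤ f x)
    {Ω : Type*} {mΩ : MeasurableSpace Ω} (P : Measure Ω) [IsProbabilityMeasure P]
    (ℱ : Filtration ℕ mΩ)
    (θ : ℕ → Ω → EuclideanSpace ℝ (Fin d))
    (g : ℕ → Ω → EuclideanSpace ℝ (Fin d))
    (σ s : ℕ → Fin d → Ω → ℝ)
    (α : ℝ) (hα : 0 < α) (hαL : α < 1 / L) (hαμ : α < 2 / μc)
    (θ0 : EuclideanSpace ℝ (Fin d)) (hθ0 : ∀ ω, θ 0 ω = θ0)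
    (hupdate : ∀ k ω, θ (k + 1) ω = θ k ω - α • g k ω)
    (hadapted : ∀ k, Measurable[ℱ k] (θ k))
    (hσadapted : ∀ k i, Measurable[ℱ k] (σ k i))
    (hσnonneg : ∀ k i ω, 0 ≤ σ k i ω)
    (hσpos : ∀ k, ∀ᵐ ω ∂P, ∃ i, 0 < σ k i ω)
    (hgradne : ∀ k, ∀ᵐ ω ∂P, gradient f (θ k ω) ≠ 0)
    (hf_int : ∀ k, Integrable (fun ω => f (θ k ω)) P)
    (hg_sq_int : ∀ k, Integrable (fun ω => ‖g k ω‖ ^ 2) P)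
    -- Assumption 1: conditionally unbiased estimators
    (hmean : ∀ k i,
      P[(fun ω => g k ω i)|ℱ k] =ᵐ[P] fun ω => gradient f (θ k ω) i)
    -- Assumption 2: conditional component variances σᵢ²/sᵢ
    (hvar : ∀ k i,
      P[(fun ω => (g k ω i - gradient f (θ k ω) i) ^ 2)|ℱ k]
        =ᵐ[P] fun ω => (σ k i ω) ^ 2 / s k i ω)
    -- Assumption 6: the gCANS shot allocation rule
    (hshot : ∀ k i, ∀ᵐ ω ∂P, s k i ω =
      2 * L * α / (2 - L * α) * (σ k i ω * ∑ j, σ k j ω)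
        / ‖gradient f (θ k ω)‖ ^ 2) :
    ∃ R γ : ℝ, 0 ≤ R ∧ 0 < γ ∧ γ < 1 ∧
      ∀ k, (∫ ω, f (θ k ω) ∂P) - fstar ≤ R * γ ^ k :=
  gcans_geometric_convergence_general d f μc L hμc hL hdiff hconv hlip fstar hmin P ℱ θ g σ s α hα
    hαL hαμ hupdate hadapted hf_int hg_sq_int hmean hvar hshot
end

section
/- Fix α, L > 0 with Lα < 2 and σ > 0, G > 0. For a single parameter (d = 1), the per-shot expected gain γ(s) = [(α − Lα²/2)G − (Lα²/2)σ²/s]/s, s ∈ (0,∞), is maximized at s* = 2 · (Lα/(2−Lα)) · σ²/G = (2Lα/(2−Lα)) σ²/G, and γ is strictly increasing on (0, s*) and strictly decreasing on (s*, ∞). -/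
open Real

lemma aux_icans (A B : ℝ) (hA : 0 < A) (hB : 0 < B) :
    StrictMonoOn (fun s => A / s - B / s ^ 2) (Set.Ioo 0 (2 * B / A)) ∧
    StrictAntiOn (fun s => A / s - B / s ^ 2) (Set.Ioi (2 * B / A)) ∧
    ∀ s : ℝ, 0 < s →
      A / s - B / s ^ 2 ≤ A / (2 * B / A) - B / (2 * B / A) ^ 2 := by
  have hstar : 0 < 2 * B / A := by positivity
  refine ⟨?_, ?_, ?_⟩
  · intro s hs t ht hst
    have hs0 : 0 < s := hs.1
    have ht0 : 0 < t := ht.1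
    have hsA : A * s < 2 * B := by
      have := hs.2
      rw [lt_div_iff₀ hA] at this; linarith
    have htA : A * t < 2 * B := by
      have := ht.2
      rw [lt_div_iff₀ hA] at this; linarith
    have hdiff : (A / t - B / t ^ 2) - (A / s - B / s ^ 2)
        = (t - s) * (B * (t + s) - A * s * t) / (s ^ 2 * t ^ 2) := by
      field_simp; ring
    have hpos : 0 < (t - s) * (B * (t + s) - A * s * t) / (s ^ 2 * t ^ 2) := by
      have h1 : 0 < t - s := by linarith
      have h2 : 0 < B * (t + s) - A * s * t := by nlinarith
      positivity
    simp only []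
    linarith [hdiff, hpos]
  · intro s hs t ht hst
    have hs0 : 0 < s := lt_trans hstar hs
    have ht0 : 0 < t := lt_trans hstar (lt_trans hs hst)
    have hsA : 2 * B < A * s := by
      rw [Set.mem_Ioi, div_lt_iff₀ hA] at hs; linarith
    have htA : 2 * B < A * t := by
      have := lt_trans hs hst
      rw [div_lt_iff₀ hA] at this; linarith
    have hdiff : (A / t - B / t ^ 2) - (A / s - B / s ^ 2)
        = (t - s) * (B * (t + s) - A * s * t) / (s ^ 2 * t ^ 2) := by
      field_simp; ring
    have hneg : (t - s) * (B * (t + s) - A * s * t) / (s ^ 2 * t ^ 2) < 0 := by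
      have h1 : 0 < t - s := by linarith
      have h2 : B * (t + s) - A * s * t < 0 := by nlinarith
      have h3 : (0:ℝ) < s ^ 2 * t ^ 2 := by positivity
      exact div_neg_of_neg_of_pos (mul_neg_of_pos_of_neg h1 h2) h3
    simp only []
    linarith [hdiff, hneg]
  · intro s hs0
    have hdiff : (A / (2 * B / A) - B / (2 * B / A) ^ 2) - (A / s - B / s ^ 2)
        = (A * s - 2 * B) ^ 2 / (4 * B * s ^ 2) := by
      field_simp; ring
    have : 0 ≤ (A * s - 2 * B) ^ 2 / (4 * B * s ^ 2) := by positivity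
    linarith

/-- **Optimal single-parameter shot count (iCANS = gCANS for d = 1).** The per-shot
expected gain `γ(s) = [(α − Lα²/2)G − (Lα²/2)σ²/s]/s` is maximized over `s ∈ (0,∞)`
at `s* = (2Lα/(2−Lα)) σ²/G`, being strictly increasing on `(0, s*)` and strictly
decreasing on `(s*, ∞)`. -/
theorem icans_single_parameter_optimum
    (α L σ G : ℝ) (hα : 0 < α) (hL : 0 < L) (hLα : L * α < 2)
    (hσ : 0 < σ) (hG : 0 < G)
    (γ : ℝ → ℝ)
    (hγ : γ = fun s => ((α - L * α ^ 2 / 2) * G - L * α ^ 2 / 2 * σ ^ 2 / s) / s)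
    (sstar : ℝ) (hsstar : sstar = 2 * (L * α / (2 - L * α)) * σ ^ 2 / G) :
    sstar = 2 * L * α / (2 - L * α) * σ ^ 2 / G ∧
      StrictMonoOn γ (Set.Ioo 0 sstar) ∧
      StrictAntiOn γ (Set.Ioi sstar) ∧
      ∀ s : ℝ, 0 < s → γ s ≤ γ sstar := by
  have h2 : 0 < 2 - L * α := by linarith
  set A := (α - L * α ^ 2 / 2) * G with hAdef
  set B := L * α ^ 2 / 2 * σ ^ 2 with hBdef
  have hA : 0 < A := by
    have : 0 < α - L * α ^ 2 / 2 := by nlinarith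
    positivity
  have hB : 0 < B := by positivity
  have hγ' : γ = fun s => A / s - B / s ^ 2 := by
    rw [hγ]; funext s
    rw [sub_div, div_div, ← pow_two]
  have hs' : sstar = 2 * B / A := by
    rw [hsstar, div_eq_div_iff hG.ne' hA.ne', hAdef, hBdef]
    field_simp
  obtain ⟨hmono, hanti, hmax⟩ := aux_icans A B hA hB
  refine ⟨by rw [hsstar]; ring, ?_, ?_, ?_⟩
  · rw [hγ', hs']; exact hmono
  · rw [hγ', hs']; exact hanti
  · intro s hs
    rw [hγ', hs']
    exact hmax s hs
end
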